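/- Let G(V) be an ADMG and let J ⊆ V be a set that admits a valid fixing sequence in G. Then the greedy procedure never requires backtracking: if σ is any valid fixing sequence in G consisting of elements of J such that no element of J not occurring in σ is fixable in φ_σ(G), then σ enumerates all of J. Consequently, repeatedly fixing an arbitrary fixable element of J always produces a valid fixing sequence for all of J. -/

import Mathlib

/-- A conditional acyclic directed mixed graph (CADMG) on vertex type `V`:
a directed edge relation `dir` with no directed cycles, a symmetric irreflexive
bidirected edge relation `bi`, and a set `rnd` of random vertices (the remaining
vertices being fixed), such that no directed edge points into a fixed vertex and
no bidirected edge is incident to a fixed vertex.  An ADMG is the special case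
`rnd = Set.univ`. -/
structure CADMG (V : Type*) where
  dir : V → V → Prop
  bi : V → V → Prop
  rnd : Set V
  acyclic : ∀ v, ¬ Relation.TransGen dir v v
  bi_symm : ∀ a b, bi a b → bi b a
  bi_irrefl : ∀ a, ¬ bi a a
  dir_rnd : ∀ a b, dir a b → b ∈ rnd
  bi_rnd : ∀ a b, bi a b → a ∈ rnd ∧ b ∈ rnd

namespace CADMG

variable {V : Type*}

/-- A random vertex `r` is fixable if there is no other vertex `w` with both a
directed path from `r` to `w` and a bidirected path from `r` to `w`. -/
def Fixable (G : CADMG V) (r : V) : Prop :=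
  r ∈ G.rnd ∧
    ¬ ∃ w, w ≠ r ∧ Relation.ReflTransGen G.dir r w ∧ Relation.ReflTransGen G.bi r w

/-- The fixing operator: move `r` from the random to the fixed vertices and delete
all directed edges into `r` and all bidirected edges incident to `r`. -/
def fix (G : CADMG V) (r : V) : CADMG V where
  dir a b := G.dir a b ∧ b ≠ r
  bi a b := G.bi a b ∧ a ≠ r ∧ b ≠ r
  rnd := G.rnd \ {r}
  acyclic v h := G.acyclic v (Relation.TransGen.mono (by intro _ _ hab; exact hab.1) _ _ h)
  bi_symm a b h := ⟨G.bi_symm a b h.1, h.2.2, h.2.1⟩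
  bi_irrefl a h := G.bi_irrefl a h.1
  dir_rnd a b h := ⟨G.dir_rnd a b h.1, h.2⟩
  bi_rnd a b h := ⟨⟨(G.bi_rnd a b h.1).1, h.2.1⟩, (G.bi_rnd a b h.1).2, h.2.2⟩

/-- A sequence of vertices is a valid fixing sequence if it is empty, or its head is
fixable and its tail is valid in the graph obtained by fixing the head. -/
def Valid (G : CADMG V) : List V → Prop
  | [] => True
  | r :: rest => G.Fixable r ∧ (G.fix r).Valid rest

/-- `φ_σ(G)`: the CADMG obtained by applying the fixing operators along the list `σ`. -/
def fixList (G : CADMG V) : List V → CADMG V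
  | [] => G
  | r :: rest => (G.fix r).fixList rest

/-- A set `R` of random vertices is reachable if some ordering of the remaining random
vertices is a valid fixing sequence. -/
def Reachable (G : CADMG V) (R : Set V) : Prop :=
  ∃ σ : List V, G.Valid σ ∧ ∀ v, v ∈ σ ↔ v ∈ G.rnd \ R

/-- `C` is the reachable closure of `S`: the smallest reachable superset of `S`. -/
def IsReachableClosure (G : CADMG V) (S C : Set V) : Prop :=
  G.Reachable C ∧ S ⊆ C ∧ ∀ T, G.Reachable T → S ⊆ T → C ⊆ T

/-- `D` is bidirected-connected (within `D` itself): `D` is nonempty and any two of its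
elements are joined by a bidirected path staying inside `D`. -/
def BiConnected (G : CADMG V) (D : Set V) : Prop :=
  D.Nonempty ∧ ∀ a ∈ D, ∀ b ∈ D,
    Relation.ReflTransGen (fun x y => G.bi x y ∧ x ∈ D ∧ y ∈ D) a b

/-- An intrinsic set: reachable and bidirected-connected. -/
def Intrinsic (G : CADMG V) (R : Set V) : Prop :=
  G.Reachable R ∧ G.BiConnected R

/-- The induced subgraph on a set `W` of vertices (vertices outside `W` become fixed
and lose all their edges). -/
def induce (G : CADMG V) (W : Set V) : CADMG V where
  dir a b := G.dir a b ∧ a ∈ W ∧ b ∈ W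
  bi a b := G.bi a b ∧ a ∈ W ∧ b ∈ W
  rnd := G.rnd ∩ W
  acyclic v h := G.acyclic v (Relation.TransGen.mono (by intro _ _ hab; exact hab.1) _ _ h)
  bi_symm a b h := ⟨G.bi_symm a b h.1, h.2.2, h.2.1⟩
  bi_irrefl a h := G.bi_irrefl a h.1
  dir_rnd a b h := ⟨G.dir_rnd a b h.1, h.2.2⟩
  bi_rnd a b h := ⟨⟨(G.bi_rnd a b h.1).1, h.2.1⟩, (G.bi_rnd a b h.1).2, h.2.2⟩

/-- The districts of a CADMG: the connected components of its random vertices under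
the bidirected edge relation. -/
def District (G : CADMG V) (D : Set V) : Prop :=
  ∃ v ∈ G.rnd, D = {w | Relation.ReflTransGen G.bi v w}

/-- `Y*`: the set of vertices having a directed path (possibly of length zero) to an
element of `Y` that does not intersect `A`. -/
def Ystar (G : CADMG V) (A Y : Set V) : Set V :=
  {v | ∃ y ∈ Y, Relation.ReflTransGen (fun a b => G.dir a b ∧ a ∉ A ∧ b ∉ A) v y}

/-- `F` is an `R`-rooted C-forest: `R ⊆ F`, `F` is bidirected-connected in the induced
subgraph `G_F`, and there is a subgraph of `G_F` with vertex set `F` and a subset `E` of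
its directed edges in which every element of `F` has a directed path (possibly of
length zero) to an element of `R`. -/
def CForest (G : CADMG V) (R F : Set V) : Prop :=
  R ⊆ F ∧ G.BiConnected F ∧
    ∃ E : V → V → Prop,
      (∀ a b, E a b → G.dir a b ∧ a ∈ F ∧ b ∈ F) ∧
      ∀ f ∈ F, ∃ r ∈ R, Relation.ReflTransGen E f r

/-- A hedge for `(Y, A)` in `G`: a pair `(F, F')` of `R`-rooted C-forests, for some common
root set `R`, with `F ⊊ F'`, `F ∩ A = ∅`, `A ∩ (F' \ F) ≠ ∅`, and every element of `R`
has a directed path to an element of `Y` that does not intersect `A`. -/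
def Hedge (G : CADMG V) (Y A : Set V) : Prop :=
  ∃ R F F', G.CForest R F ∧ G.CForest R F' ∧ F ⊂ F' ∧ F ∩ A = ∅ ∧
    (A ∩ (F' \ F)).Nonempty ∧
    ∀ r ∈ R, ∃ y ∈ Y, Relation.ReflTransGen (fun a b => G.dir a b ∧ a ∉ A ∧ b ∉ A) r y

@[simp]
lemma fixList_dir (G : CADMG V) (σ : List V) (a b : V) :
    (G.fixList σ).dir a b ↔ G.dir a b ∧ b ∉ σ := by
  induction σ generalizing G with
  | nil => simp [fixList]
  | cons r σ ih => simp only [fixList, ih, fix, List.mem_cons]; tauto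

@[simp]
lemma fixList_bi (G : CADMG V) (σ : List V) (a b : V) :
    (G.fixList σ).bi a b ↔ G.bi a b ∧ a ∉ σ ∧ b ∉ σ := by
  induction σ generalizing G with
  | nil => simp [fixList]
  | cons r σ ih => simp only [fixList, ih, fix, List.mem_cons]; tauto

@[simp]
lemma mem_fixList_rnd (G : CADMG V) (σ : List V) (v : V) :
    v ∈ (G.fixList σ).rnd ↔ v ∈ G.rnd ∧ v ∉ σ := by
  induction σ generalizing G with
  | nil => simp [fixList]
  | cons r σ ih =>
      simp only [fixList, ih, fix, List.mem_cons, Set.mem_sdiff, Set.mem_singleton_iff]; tauto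

lemma valid_append {G : CADMG V} {l₁ l₂ : List V} :
    G.Valid (l₁ ++ l₂) ↔ G.Valid l₁ ∧ (G.fixList l₁).Valid l₂ := by
  induction l₁ generalizing G with
  | nil => simp [Valid, fixList]
  | cons r l₁ ih => simp only [List.cons_append, Valid, fixList, ih, and_assoc]

lemma Valid.fixable_of_append_cons {G : CADMG V} {l₁ l₂ : List V} {t : V}
    (h : G.Valid (l₁ ++ t :: l₂)) : (G.fixList l₁).Fixable t :=
  (valid_append.1 h).2.1

lemma Fixable.of_subgraph {G G' : CADMG V} {t : V} (hdir : ∀ a b, G'.dir a b → G.dir a b)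
    (hbi : ∀ a b, G'.bi a b → G.bi a b) (ht : t ∈ G'.rnd) (h : G.Fixable t) :
    G'.Fixable t :=
  ⟨ht, fun ⟨w, hwt, hd, hb⟩ =>
    h.2 ⟨w, hwt, Relation.ReflTransGen.mono hdir _ _ hd, Relation.ReflTransGen.mono hbi _ _ hb⟩⟩

lemma Fixable.fixList_of_subset {G : CADMG V} {σ σ' : List V} {t : V} (hsub : σ ⊆ σ')
    (ht : t ∉ σ') (h : (G.fixList σ).Fixable t) : (G.fixList σ').Fixable t := by
  refine h.of_subgraph (fun a b hab => ?_) (fun a b hab => ?_) ?_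
  · simp only [fixList_dir] at hab ⊢
    exact ⟨hab.1, fun hb => hab.2 (hsub hb)⟩
  · simp only [fixList_bi] at hab ⊢
    exact ⟨hab.1, fun ha => hab.2.1 (hsub ha), fun hb => hab.2.2 (hsub hb)⟩
  · exact (mem_fixList_rnd G σ' t).2 ⟨((mem_fixList_rnd G σ t).1 h.1).1, ht⟩

lemma _root_.List.exists_eq_append_cons_of_not_subset {α : Type*} {τ σ : List α}
    (h : ¬ τ ⊆ σ) : ∃ l₁ t l₂, τ = l₁ ++ t :: l₂ ∧ l₁ ⊆ σ ∧ t ∉ σ := by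
  induction τ with
  | nil => simp at h
  | cons a τ ih =>
      by_cases ha : a ∈ σ
      · obtain ⟨l₁, t, l₂, rfl, h₁, ht⟩ := ih fun hs => h (List.cons_subset.2 ⟨ha, hs⟩)
        exact ⟨a :: l₁, t, l₂, rfl, List.cons_subset.2 ⟨ha, h₁⟩, ht⟩
      · exact ⟨[], a, τ, rfl, List.nil_subset _, ha⟩

/-- The first element `t` of `τ` outside `σ` is fixable after its predecessors, which all
lie in `σ`; fixing the rest of `σ` only deletes edges. -/
lemma Valid.exists_fixable_fixList {G : CADMG V} {τ : List V} (hτ : G.Valid τ) (σ : List V)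
    (hτσ : ¬ τ ⊆ σ) : ∃ t ∈ τ, t ∉ σ ∧ (G.fixList σ).Fixable t := by
  obtain ⟨l₁, t, l₂, rfl, h₁, ht⟩ := List.exists_eq_append_cons_of_not_subset hτσ
  exact ⟨t, by simp, ht, (hτ.fixable_of_append_cons).fixList_of_subset h₁ ht⟩

end CADMG

theorem greedy_no_backtracking_general
    {V : Type*} (G : CADMG V) (J : Set V)
    (hJ : ∃ τ : List V, G.Valid τ ∧ ∀ v, v ∈ τ ↔ v ∈ J)
    (σ : List V)
    (hstuck : ∀ v ∈ J, v ∉ σ → ¬ (G.fixList σ).Fixable v) :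
    ∀ v ∈ J, v ∈ σ := by
  obtain ⟨τ, hτ, hτJ⟩ := hJ
  by_contra! ⟨v, hvJ, hvσ⟩
  obtain ⟨t, htτ, htσ, htfix⟩ :=
    hτ.exists_fixable_fixList σ fun hsub => hvσ (hsub ((hτJ v).2 hvJ))
  exact hstuck t ((hτJ t).1 htτ) htσ htfix

/-- Greedy fixing never requires backtracking: if `J` admits a valid fixing
sequence in the ADMG `G`, and `σ` is a valid fixing sequence of elements of `J` such that
no element of `J` not occurring in `σ` is fixable in `φ_σ(G)`, then `σ` enumerates
all of `J`. -/
theorem greedy_no_backtracking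
    {V : Type*} [Fintype V] (G : CADMG V) (hG : G.rnd = Set.univ) (J : Set V)
    (hJ : ∃ τ : List V, G.Valid τ ∧ ∀ v, v ∈ τ ↔ v ∈ J)
    (σ : List V) (hσ : G.Valid σ) (hσJ : ∀ v ∈ σ, v ∈ J)
    (hstuck : ∀ v ∈ J, v ∉ σ → ¬ (G.fixList σ).Fixable v) :
    ∀ v ∈ J, v ∈ σ :=
  greedy_no_backtracking_general G J hJ σ hstuck
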